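/- arXiv:1808.04227 — 4 statements merged into one kernel-verified Lean document; each statement's English description precedes it below -/
import Mathlib

section
/- Let z1, z2, z3, z4 be complex numbers with z1 ≠ z2, z2 ≠ z3, z3 ≠ z4, z4 ≠ z1, and let z be a complex number distinct from each zk. Define the star-ratio sr(y; y1,y2,y3,y4) = -((y1-y)*(y3-y))/((y2-y)*(y4-y)). If w = (z*C2 + C3)/(z*C1 - C2) with C1 = z1 - z2 + z3 - z4, C2 = z1*z3 - z2*z4, C3 = z2*z3*z4 - z1*z3*z4 + z1*z2*z4 - z1*z2*z3, and all denominators appearing are nonzero, then sr(w; z1,z2,z3,z4) = sr(z; z1,z2,z3,z4). -/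
/-- star ratio of a point with respect to four points -/
noncomputable def starRatio (y y1 y2 y3 y4 : ℂ) : ℂ :=
  -((y1 - y) * (y3 - y)) / ((y2 - y) * (y4 - y))

theorem mob_preserves_starRatio (z z1 z2 z3 z4 : ℂ)
    (h12 : z1 ≠ z2) (h23 : z2 ≠ z3) (h34 : z3 ≠ z4) (h41 : z4 ≠ z1)
    (hz1 : z ≠ z1) (hz2 : z ≠ z2) (hz3 : z ≠ z3) (hz4 : z ≠ z4)
    (C1 C2 C3 : ℂ)
    (hC1 : C1 = z1 - z2 + z3 - z4)
    (hC2 : C2 = z1*z3 - z2*z4)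
    (hC3 : C3 = z2*z3*z4 - z1*z3*z4 + z1*z2*z4 - z1*z2*z3)
    (hden : z*C1 - C2 ≠ 0)
    (w : ℂ) (hw : w = (z*C2 + C3)/(z*C1 - C2))
    (hw1 : w ≠ z1) (hw2 : w ≠ z2) (hw3 : w ≠ z3) (hw4 : w ≠ z4) :
    starRatio w z1 z2 z3 z4 = starRatio z z1 z2 z3 z4 := by
  subst hC1 hC2 hC3
  set D := z*(z1 - z2 + z3 - z4) - (z1*z3 - z2*z4) with hD
  have hw' : w * D = z * (z1*z3 - z2*z4) + (z2*z3*z4 - z1*z3*z4 + z1*z2*z4 - z1*z2*z3) := by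
    rw [hw]; field_simp
  have e1 : (z1 - w) * D = (z - z3)*(z1 - z2)*(z1 - z4) := by linear_combination -hw'
  have e2 : (z2 - w) * D = (z - z4)*(z1 - z2)*(z2 - z3) := by linear_combination -hw'
  have e3 : (z3 - w) * D = (z - z1)*(z3 - z2)*(z3 - z4) := by linear_combination -hw'
  have e4 : (z4 - w) * D = (z - z2)*(z3 - z4)*(z4 - z1) := by linear_combination -hw'
  have h2 : z2 - w ≠ 0 := sub_ne_zero.mpr (Ne.symm hw2)
  have h4 : z4 - w ≠ 0 := sub_ne_zero.mpr (Ne.symm hw4)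
  have g2 : z2 - z ≠ 0 := sub_ne_zero.mpr (Ne.symm hz2)
  have g4 : z4 - z ≠ 0 := sub_ne_zero.mpr (Ne.symm hz4)
  unfold starRatio
  rw [div_eq_div_iff (mul_ne_zero h2 h4) (mul_ne_zero g2 g4)]
  have key : (-((z1 - w) * (z3 - w)) * ((z2 - z) * (z4 - z))) * (D * D)
      = (-((z1 - z) * (z3 - z)) * ((z2 - w) * (z4 - w))) * (D * D) := by
    linear_combination (-(z3-w)*D*(z2-z)*(z4-z)) * e1
      + (-(z-z3)*(z1-z2)*(z1-z4)*(z2-z)*(z4-z)) * e3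
      + ((z1-z)*(z3-z)*(z4-w)*D) * e2 + ((z1-z)*(z3-z)*(z-z4)*(z1-z2)*(z2-z3)) * e4
  exact mul_right_cancel₀ (mul_ne_zero hden hden) key
end

section
/- Let z1, z2, z3, z4 be complex numbers with z1 ≠ z2, z2 ≠ z3, z3 ≠ z4, z4 ≠ z1, and let z be distinct from each zk with all relevant denominators nonzero. If w is a complex number with w ≠ zk for all k and sr(w; z1,z2,z3,z4) = sr(z; z1,z2,z3,z4), then w = z or w = (z*C2 + C3)/(z*C1 - C2), where C1, C2, C3 are the Möbius mutation coefficients; that is, the equation sr(w; z1,z2,z3,z4) = sr(z; z1,z2,z3,z4) in the unknown w has at most two solutions: z itself and mob(z1,z2,z3,z4)(z). -/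
theorem starRatio_eq_at_most_two_solutions (z z1 z2 z3 z4 : ℂ)
    (h12 : z1 ≠ z2) (h23 : z2 ≠ z3) (h34 : z3 ≠ z4) (h41 : z4 ≠ z1)
    (hz1 : z ≠ z1) (hz2 : z ≠ z2) (hz3 : z ≠ z3) (hz4 : z ≠ z4)
    (C1 C2 C3 : ℂ)
    (hC1 : C1 = z1 - z2 + z3 - z4)
    (hC2 : C2 = z1*z3 - z2*z4)
    (hC3 : C3 = z2*z3*z4 - z1*z3*z4 + z1*z2*z4 - z1*z2*z3)
    (hden : z*C1 - C2 ≠ 0)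
    (w : ℂ) (hw1 : w ≠ z1) (hw2 : w ≠ z2) (hw3 : w ≠ z3) (hw4 : w ≠ z4)
    (hsr : starRatio w z1 z2 z3 z4 = starRatio z z1 z2 z3 z4) :
    w = z ∨ w = (z*C2 + C3)/(z*C1 - C2) := by
  have hb1 : (z2 - w) * (z4 - w) ≠ 0 :=
    mul_ne_zero (sub_ne_zero.2 (Ne.symm hw2)) (sub_ne_zero.2 (Ne.symm hw4))
  have hb2 : (z2 - z) * (z4 - z) ≠ 0 :=
    mul_ne_zero (sub_ne_zero.2 (Ne.symm hz2)) (sub_ne_zero.2 (Ne.symm hz4))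
  unfold starRatio at hsr
  rw [div_eq_div_iff hb1 hb2] at hsr
  have key : (w - z) * (w*(z*C1 - C2) - (z*C2 + C3)) = 0 := by
    subst hC1 hC2 hC3
    linear_combination -hsr
  rcases mul_eq_zero.1 key with h | h
  · left; exact sub_eq_zero.1 h
  · right
    rw [eq_div_iff hden]
    linear_combination h
end

section
/- Real star-ratio criterion (Lemma: circle patterns have real star-ratios), degree-4 case: let M, M1, M2, M3, M4 ∈ ℂ with Mk ≠ M, and let V1 ∈ ℂ with V1 ≠ M. Define V2 as the reflection of V1 about the line M M1, V3 as the reflection of V2 about line M M2, V4 the reflection of V3 about line M M3, and V5 the reflection of V4 about line M M4. If V5 = V1, then the star-ratio sr(M; M1,M2,M3,M4) = -((M1-M)(M3-M))/((M2-M)(M4-M)) is a real number. -/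
open Complex

/-- Reflection of `z` about the line through the points `A` and `B`. -/
noncomputable def lineRefl (A B z : ℂ) : ℂ :=
  A + ((B - A) / (starRingEnd ℂ) (B - A)) * (starRingEnd ℂ) (z - A)

theorem real_starRatio_of_reflection_closure
    (M M1 M2 M3 M4 V1 : ℂ)
    (h1 : M1 ≠ M) (h2 : M2 ≠ M) (h3 : M3 ≠ M) (h4 : M4 ≠ M)
    (hV : V1 ≠ M)
    (hclose : lineRefl M M4 (lineRefl M M3 (lineRefl M M2 (lineRefl M M1 V1))) = V1) :
    ∃ r : ℝ, -((M1 - M) * (M3 - M)) / ((M2 - M) * (M4 - M)) = (r : ℂ) := by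
  set a1 := M1 - M with ha1def
  set a2 := M2 - M with ha2def
  set a3 := M3 - M with ha3def
  set a4 := M4 - M with ha4def
  have ha1 : a1 ≠ 0 := sub_ne_zero.mpr h1
  have ha2 : a2 ≠ 0 := sub_ne_zero.mpr h2
  have ha3 : a3 ≠ 0 := sub_ne_zero.mpr h3
  have ha4 : a4 ≠ 0 := sub_ne_zero.mpr h4
  have hc1 : (starRingEnd ℂ) a1 ≠ 0 := by simpa using ha1
  have hc2 : (starRingEnd ℂ) a2 ≠ 0 := by simpa using ha2
  have hc3 : (starRingEnd ℂ) a3 ≠ 0 := by simpa using ha3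
  have hc4 : (starRingEnd ℂ) a4 ≠ 0 := by simpa using ha4
  have hVM : V1 - M ≠ 0 := sub_ne_zero.mpr hV
  have hgoal : -((M1 - M) * (M3 - M)) / ((M2 - M) * (M4 - M)) = -(a1 * a3) / (a2 * a4) := by
    rw [ha1def, ha2def, ha3def, ha4def]
  have hcomp : lineRefl M M4 (lineRefl M M3 (lineRefl M M2 (lineRefl M M1 V1))) =
      M + (a4 / (starRingEnd ℂ) a4) * ((starRingEnd ℂ) a3 / a3) *
        (a2 / (starRingEnd ℂ) a2) * ((starRingEnd ℂ) a1 / a1) * (V1 - M) := by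
    simp only [lineRefl, ← ha1def, ← ha2def, ← ha3def, ← ha4def, map_add, map_sub, map_mul,
      map_div₀, Complex.conj_conj]
    field_simp
    ring
  rw [hcomp] at hclose
  rw [hgoal]
  clear_value a1 a2 a3 a4
  have hK : (a4 / (starRingEnd ℂ) a4) * ((starRingEnd ℂ) a3 / a3) *
      (a2 / (starRingEnd ℂ) a2) * ((starRingEnd ℂ) a1 / a1) = 1 := by
    have h := hclose
    have : ((a4 / (starRingEnd ℂ) a4) * ((starRingEnd ℂ) a3 / a3) *
      (a2 / (starRingEnd ℂ) a2) * ((starRingEnd ℂ) a1 / a1) - 1) * (V1 - M) = 0 := by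
      linear_combination h
    rcases mul_eq_zero.mp this with h' | h'
    · exact sub_eq_zero.mp h'
    · exact absurd h' hVM
  have key : a1 * a3 * (starRingEnd ℂ) a2 * (starRingEnd ℂ) a4 =
      (starRingEnd ℂ) a1 * (starRingEnd ℂ) a3 * a2 * a4 := by
    field_simp at hK
    linear_combination -hK
  have hw : (starRingEnd ℂ) (-(a1 * a3) / (a2 * a4)) = -(a1 * a3) / (a2 * a4) := by
    simp only [map_div₀, map_mul, map_neg]
    field_simp
    linear_combination key
  obtain ⟨r, hr⟩ := Complex.conj_eq_iff_real.mp hw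
  exact ⟨r, hr⟩
end

section
/- Symmetry of the Möbius mutation on the octahedron: let z1, z2, z3 and z1', z2', z3' be complex numbers such that z1' = mob(z2, z3, z2', z3')(z1), where mob(a,b,c,d) is the Möbius mutation map. Then also z2' = mob(z1, z3, z1', z3')(z2) and z3' = mob(z1, z2, z1', z2')(z3), and moreover mob(z1, z2, z1', z2') = mob(z2, z3, z2', z3') = mob(z1, z3, z1', z3') as Möbius transformations (assuming all configurations are nondegenerate, i.e. the relevant consecutive points are distinct). -/
/-- The Möbius mutation map determined by four points. -/
noncomputable def mob (w1 w2 w3 w4 z : ℂ) : ℂ :=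
  (z * (w1*w3 - w2*w4) + (w2*w3*w4 - w1*w3*w4 + w1*w2*w4 - w1*w2*w3)) /
    (z * (w1 - w2 + w3 - w4) - (w1*w3 - w2*w4))

private lemma mob_prop (a1 a2 a3 b1 b2 b3 k : ℂ) (hk : k ≠ 0)
    (h1 : a1 = k * b1) (h2 : a2 = k * b2) (h3 : a3 = k * b3) (z : ℂ) :
    (z * a2 + a3) / (z * a1 - a2) = (z * b2 + b3) / (z * b1 - b2) := by
  subst h1 h2 h3
  rw [show z * (k * b2) + k * b3 = k * (z * b2 + b3) from by ring,
      show z * (k * b1) - k * b2 = k * (z * b1 - b2) from by ring,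
      mul_div_mul_left _ _ hk]

theorem mob_octahedron_symmetry (z1 z2 z3 z1' z2' z3' : ℂ)
    -- nondegeneracy: consecutive points of each quadruple are distinct
    (ha1 : z2 ≠ z3) (ha2 : z3 ≠ z2') (ha3 : z2' ≠ z3') (ha4 : z3' ≠ z2)
    (hb1 : z1 ≠ z3) (hb2 : z3 ≠ z1') (hb3 : z1' ≠ z3') (hb4 : z3' ≠ z1)
    (hc1 : z1 ≠ z2) (hc2 : z2 ≠ z1') (hc3 : z1' ≠ z2') (hc4 : z2' ≠ z1)
    -- the defining relation is nondegenerate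
    (hden : z1 * (z2 - z3 + z2' - z3') - (z2*z2' - z3*z3') ≠ 0)
    (h : z1' = mob z2 z3 z2' z3' z1) :
    z2' = mob z1 z3 z1' z3' z2 ∧
    z3' = mob z1 z2 z1' z2' z3 ∧
    (∀ z : ℂ, mob z1 z2 z1' z2' z = mob z2 z3 z2' z3' z) ∧
    (∀ z : ℂ, mob z2 z3 z2' z3' z = mob z1 z3 z1' z3' z) := by
  set D : ℂ := z1 * (z2 - z3 + z2' - z3') - (z2*z2' - z3*z3') with hD
  -- the defining relation cleared of denominators
  have hE : z1' * D = z1 * (z2*z2' - z3*z3') +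
      (z3*z2'*z3' - z2*z2'*z3' + z2*z3*z3' - z2*z3*z2') := by
    rw [h, mob, hD]
    field_simp
    exact mul_div_cancel_right₀ _ hden
  -- proportionality factor for quadruple (z1, z2, z1', z2')
  have hkA : (z1 - z2) * (z1 - z2') / D ≠ 0 :=
    div_ne_zero (mul_ne_zero (sub_ne_zero.2 hc1) (sub_ne_zero.2 hc4.symm)) hden
  have hA1 : z1 - z2 + z1' - z2' =
      (z1 - z2) * (z1 - z2') / D * (z2 - z3 + z2' - z3') := by
    rw [div_mul_eq_mul_div, eq_div_iff hden]
    linear_combination hE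
  have hA2 : z1*z1' - z2*z2' =
      (z1 - z2) * (z1 - z2') / D * (z2*z2' - z3*z3') := by
    rw [div_mul_eq_mul_div, eq_div_iff hden]
    linear_combination z1 * hE
  have hA3 : z2*z1'*z2' - z1*z1'*z2' + z1*z2*z2' - z1*z2*z1' =
      (z1 - z2) * (z1 - z2') / D *
        (z3*z2'*z3' - z2*z2'*z3' + z2*z3*z3' - z2*z3*z2') := by
    rw [div_mul_eq_mul_div, eq_div_iff hden]
    linear_combination (z2*z2' - z1*z2' - z1*z2) * hE
  -- proportionality factor for quadruple (z1, z3, z1', z3')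
  have hkC : (z1 - z3) * (z1 - z3') / D ≠ 0 :=
    div_ne_zero (mul_ne_zero (sub_ne_zero.2 hb1) (sub_ne_zero.2 hb4.symm)) hden
  have hC1 : z1 - z3 + z1' - z3' =
      (z1 - z3) * (z1 - z3') / D * (z2 - z3 + z2' - z3') := by
    rw [div_mul_eq_mul_div, eq_div_iff hden]
    linear_combination hE
  have hC2 : z1*z1' - z3*z3' =
      (z1 - z3) * (z1 - z3') / D * (z2*z2' - z3*z3') := by
    rw [div_mul_eq_mul_div, eq_div_iff hden]
    linear_combination z1 * hE
  have hC3 : z3*z1'*z3' - z1*z1'*z3' + z1*z3*z3' - z1*z3*z1' =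
      (z1 - z3) * (z1 - z3') / D *
        (z3*z2'*z3' - z2*z2'*z3' + z2*z3*z3' - z2*z3*z2') := by
    rw [div_mul_eq_mul_div, eq_div_iff hden]
    linear_combination (z3*z3' - z1*z3' - z1*z3) * hE
  -- equality of the three Möbius maps
  have hmapA : ∀ z : ℂ, mob z1 z2 z1' z2' z = mob z2 z3 z2' z3' z := by
    intro z
    exact mob_prop _ _ _ _ _ _ _ hkA hA1 hA2 hA3 z
  have hmapC : ∀ z : ℂ, mob z2 z3 z2' z3' z = mob z1 z3 z1' z3' z := by
    intro z
    exact (mob_prop _ _ _ _ _ _ _ hkC hC1 hC2 hC3 z).symm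
  -- the B-map fixes the required points
  have hden2 : z2 * (z2 - z3 + z2' - z3') - (z2*z2' - z3*z3') ≠ 0 := by
    have : z2 * (z2 - z3 + z2' - z3') - (z2*z2' - z3*z3') = (z2 - z3) * (z2 - z3') := by
      ring
    rw [this]
    exact mul_ne_zero (sub_ne_zero.2 ha1) (sub_ne_zero.2 ha4.symm)
  have hden3 : z3 * (z2 - z3 + z2' - z3') - (z2*z2' - z3*z3') ≠ 0 := by
    have : z3 * (z2 - z3 + z2' - z3') - (z2*z2' - z3*z3') = -((z3 - z2) * (z3 - z2')) := by
      ring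
    rw [this, neg_ne_zero]
    exact mul_ne_zero (sub_ne_zero.2 ha1.symm) (sub_ne_zero.2 ha2)
  have h2' : mob z2 z3 z2' z3' z2 = z2' := by
    rw [mob, div_eq_iff hden2]
    ring
  have h3' : mob z2 z3 z2' z3' z3 = z3' := by
    rw [mob, div_eq_iff hden3]
    ring
  refine ⟨?_, ?_, hmapA, hmapC⟩
  · rw [← hmapC z2, h2']
  · rw [hmapA z3, h3']
end
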